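/- Let F ⊆ [0,1] be a set with upper box dimension at most s, and let ξ = p/q be a positive rational. Then the arithmetic combination F + ξF = {x + ξy : x, y ∈ F} satisfies: if for every k there is δ_k → 0 with N(F, δ_k) ≤ P_k and F is contained (up to scale δ_k) in an arithmetic-progression structure ∑_{i=1}^k δ_i[N_i] + [0,δ_k], then N(qF + pF, δ_k) ≤ (p+q)^{k+1} P_k, where P_k = ∏ N_i. -/

import Mathlib

open Set

/-- The least number of sets of diameter at most `δ` needed to cover `F`. -/
noncomputable def coverN {X : Type*} [PseudoMetricSpace X] (F : Set X) (δ : ℝ) : ℕ :=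
  sInf {n : ℕ | ∃ U : Fin n → Set X,
    (∀ i, EMetric.diam (U i) ≤ ENNReal.ofReal δ) ∧ F ⊆ ⋃ i, U i}

lemma coverN_le_card {X : Type*} [PseudoMetricSpace X] (F : Set X) (δ : ℝ)
    {ι : Type*} [Fintype ι] (U : ι → Set X)
    (hd : ∀ i, EMetric.diam (U i) ≤ ENNReal.ofReal δ) (hc : F ⊆ ⋃ i, U i) :
    coverN F δ ≤ Fintype.card ι := by
  apply Nat.sInf_le
  refine ⟨fun j => U ((Fintype.equivFin ι).symm j), fun j => hd _, fun x hx => ?_⟩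
  obtain ⟨i, hi⟩ := Set.mem_iUnion.1 (hc hx)
  exact Set.mem_iUnion.2 ⟨Fintype.equivFin ι i, by simpa using hi⟩

/-- If `F ⊆ ∑_{i=1}^k δ_i [N_i] + [0, δ_k]`, then the arithmetic combination
`qF + pF` can be covered by `(p+q)^{k+1} ∏_{i=1}^k N_i` sets of diameter `δ_k`. -/
theorem stmt12 (F : Set ℝ) (p q : ℕ) (hp : 0 < p) (hq : 0 < q)
    (k : ℕ) (δ : ℕ → ℝ) (hδ : ∀ i, 0 < δ i) (N : ℕ → ℕ)
    (hF : F ⊆ {x | ∃ f : ℕ → ℕ, (∀ i ∈ Finset.Icc 1 k, f i < N i) ∧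
        ∃ r ∈ Set.Icc (0:ℝ) (δ k), x = (∑ i ∈ Finset.Icc 1 k, δ i * f i) + r}) :
    (coverN {z : ℝ | ∃ x ∈ F, ∃ y ∈ F, z = q * x + p * y} (δ k) : ℝ)
      ≤ ((p:ℝ) + q) ^ (k + 1) * ∏ i ∈ Finset.Icc 1 k, (N i : ℝ) := by
  classical
  set A := Finset.Icc 1 k with hA
  have hδk := hδ k
  have hcard :
      Fintype.card (Fin (p+q) × ((i : A) → Fin ((p+q) * N i))) =
        (p+q)^(k+1) * ∏ i ∈ A, N i := by
    rw [Fintype.card_prod, Fintype.card_fin, Fintype.card_pi]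
    have h1 : ∏ i : A, Fintype.card (Fin ((p+q) * N i)) = ∏ i ∈ A, (p+q) * N i := by
      simp only [Fintype.card_fin]
      exact Finset.prod_coe_sort A (fun i => (p+q) * N i)
    rw [h1, Finset.prod_mul_distrib, Finset.prod_const, hA, Nat.card_Icc,
      Nat.add_sub_cancel, pow_succ]
    ring
  have key : coverN {z : ℝ | ∃ x ∈ F, ∃ y ∈ F, z = q * x + p * y} (δ k)
      ≤ Fintype.card (Fin (p+q) × ((i : A) → Fin ((p+q) * N i))) := by
    set c : (Fin (p+q) × ((i : A) → Fin ((p+q) * N i))) → ℝ :=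
      fun mg => (∑ i ∈ A.attach, δ i * ((mg.2 i : ℕ) : ℝ)) + mg.1 * δ k with hc
    apply coverN_le_card _ _ (fun mg => Set.Icc (c mg) (c mg + δ k))
    · intro i
      rw [EMetric.diam, Real.ediam_Icc]
      simp
    · rintro z ⟨x, hx, y, hy, rfl⟩
      obtain ⟨fx, hfx, rx, hrx, hxeq⟩ := hF hx
      obtain ⟨fy, hfy, ry, hry, hyeq⟩ := hF hy
      set t : ℝ := q * rx + p * ry with ht
      have ht0 : 0 ≤ t := by
        have := hrx.1; have := hry.1
        positivity
      have ht1 : t ≤ (p+q) * δ k := by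
        have h1 : (q:ℝ) * rx ≤ q * δ k :=
          mul_le_mul_of_nonneg_left hrx.2 (by positivity)
        have h2 : (p:ℝ) * ry ≤ p * δ k :=
          mul_le_mul_of_nonneg_left hry.2 (by positivity)
        rw [ht]; push_cast; nlinarith
      set m : ℕ := min ⌊t / δ k⌋₊ (p+q-1) with hm
      have hmlt : m < p + q := by
        have := min_le_right ⌊t / δ k⌋₊ (p+q-1); omega
      set g : (i : A) → Fin ((p+q) * N i) := fun i =>
        ⟨q * fx i + p * fy i, by
          have h1 := hfx i.1 i.2
          have h2 := hfy i.1 i.2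
          calc q * fx i.1 + p * fy i.1
              < q * N i.1 + p * N i.1 :=
                Nat.add_lt_add ((Nat.mul_lt_mul_left hq).2 h1) ((Nat.mul_lt_mul_left hp).2 h2)
            _ = (p+q) * N i.1 := by ring⟩ with hg
      refine Set.mem_iUnion.2 ⟨(⟨m, hmlt⟩, g), ?_⟩
      have hsum : (∑ i ∈ A.attach, δ i * ((g i : ℕ) : ℝ))
          = ∑ i ∈ A, δ i * ((q:ℝ) * fx i + p * fy i) := by
        rw [← Finset.sum_attach A (fun i => δ i * ((q:ℝ) * fx i + p * fy i))]
        refine Finset.sum_congr rfl fun i _ => ?_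
        simp only [hg]
        push_cast
        ring
      have hz : (q:ℝ) * x + p * y = (∑ i ∈ A, δ i * ((q:ℝ) * fx i + p * fy i)) + t := by
        have hexp : ∑ i ∈ A, δ i * ((q:ℝ) * fx i + p * fy i)
            = q * ∑ i ∈ A, δ i * (fx i : ℝ) + p * ∑ i ∈ A, δ i * (fy i : ℝ) := by
          rw [Finset.mul_sum, Finset.mul_sum, ← Finset.sum_add_distrib]
          exact Finset.sum_congr rfl fun i _ => by ring
        rw [hxeq, hyeq, hexp, ht]; ring
      have hml : (m:ℝ) * δ k ≤ t := by
        have h1 : (m:ℝ) ≤ ⌊t / δ k⌋₊ := by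
          exact_mod_cast min_le_left ⌊t / δ k⌋₊ (p+q-1)
        have h2 : (⌊t / δ k⌋₊ : ℝ) ≤ t / δ k := Nat.floor_le (by positivity)
        calc (m:ℝ) * δ k ≤ (t / δ k) * δ k := by
              apply mul_le_mul_of_nonneg_right (h1.trans h2) hδk.le
          _ = t := by field_simp
      have hmu : t ≤ ((m:ℝ) + 1) * δ k := by
        rcases min_cases ⌊t / δ k⌋₊ (p+q-1) with ⟨he, _⟩ | ⟨he, hgt⟩
        · have h3 : t / δ k < ⌊t / δ k⌋₊ + 1 := Nat.lt_floor_add_one _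
          have : t < (⌊t / δ k⌋₊ + 1 : ℝ) * δ k := by
            rw [← div_lt_iff₀ hδk] at *
            linarith [h3]
          rw [hm, he]
          exact this.le
        · have : ((m:ℝ) + 1) = (p + q : ℕ) := by
            rw [hm, he]; push_cast [Nat.cast_sub (by omega : 1 ≤ p + q)]; ring
          rw [this]
          push_cast
          exact ht1
      simp only [Set.mem_Icc]
      have hcval : c (⟨m, hmlt⟩, g)
          = (∑ i ∈ A, δ i * ((q:ℝ) * fx i + p * fy i)) + m * δ k := by
        simp only [hc]
        rw [hsum]
      rw [hcval, hz]
      constructor <;> nlinarith [hml, hmu]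
  calc (coverN {z : ℝ | ∃ x ∈ F, ∃ y ∈ F, z = q * x + p * y} (δ k) : ℝ)
      ≤ (Fintype.card (Fin (p+q) × ((i : A) → Fin ((p+q) * N i))) : ℝ) := by
        exact_mod_cast key
    _ = ((p:ℝ) + q) ^ (k + 1) * ∏ i ∈ A, (N i : ℝ) := by
        rw [hcard]; push_cast; ring
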